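/- There exist valid two-party processes W (on parties A', B') and Z (on parties A'', B'') — which may moreover be taken equal to each other and classical, namely an equal-weight mixture of a classical identity channel from one party to the other and one in the opposite direction — such that the tensor product W ⊗ Z is not a valid process for the combined parties A = A'A'' and B = B'B''. -/

import Mathlib

/-!
`Wq` is the equal mixture of the classical identity channels `x₂ → y₁` and `y₂ → x₁`. Its
Hilbert–Schmidt expansion is `(𝟙 + ½ σ₃^{x₂}σ₃^{y₁} + ½ σ₃^{x₁}σ₃^{y₂}) / 4`, so it is a valid
process whose two correlation terms signal `X → Y` and `Y → X`. Hilbert–Schmidt coefficients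
are unique and multiply under tensor products, so `Wq ⊗ Wq` contains the term
`σ₃^{a₂'}σ₃^{b₁'} ⊗ σ₃^{a₁''}σ₃^{b₂''}` with coefficient `1/64`. That term is nontrivial on the
outputs of both combined parties `A = A'A''` and `B = B'B''`, so it is in type on neither.
-/

open Matrix Kronecker BigOperators
open scoped ComplexOrder

namespace ProcessPaper

/-- A (generalized) Hilbert–Schmidt basis of operators on a finite-dimensional Hilbert
space with orthonormal basis indexed by `n`: a family of Hermitian matrices indexed by
`ι` (with `Fintype.card ι = (Fintype.card n) ^ 2`), whose distinguished element `σ 0`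
is the identity, whose other elements are traceless, which are mutually orthogonal
under the trace inner product, and which are all nonzero. -/
def IsHSBasis {n : Type*} [Fintype n] [DecidableEq n] {ι : Type*} [Fintype ι] [Zero ι]
    (σ : ι → Matrix n n ℂ) : Prop :=
  Fintype.card ι = (Fintype.card n) ^ 2 ∧
  (∀ i, (σ i).IsHermitian) ∧
  σ 0 = 1 ∧
  (∀ i, i ≠ 0 → (σ i).trace = 0) ∧
  (∀ i j, i ≠ j → (σ i * σ j).trace = 0) ∧
  (∀ i, σ i ≠ 0)

variable {P : Type*} [Fintype P] [DecidableEq P]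

section defs

variable {I O : P → Type*} [∀ p, Fintype (I p)] [∀ p, DecidableEq (I p)]
  [∀ p, Fintype (O p)] [∀ p, DecidableEq (O p)]
  {ιI ιO : P → Type*} [∀ p, Fintype (ιI p)] [∀ p, Zero (ιI p)]
  [∀ p, Fintype (ιO p)] [∀ p, Zero (ιO p)]

/-- The tensor product, over all parties, of party-local operators
(each party `p` carries the Hilbert space of its input system `I p`
tensored with its output system `O p`). -/
def tensorFamily (M : ∀ p, Matrix (I p × O p) (I p × O p) ℂ) :
    Matrix ((p : P) → I p × O p) ((p : P) → I p × O p) ℂ :=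
  fun x y => ∏ p, M p (x p) (y p)

/-- The Hilbert–Schmidt basis term with multi-index `t`:
`⨂_p σI p (t p).1 ⊗ σO p (t p).2`. -/
def hsTerm (σI : ∀ p, ιI p → Matrix (I p) (I p) ℂ)
    (σO : ∀ p, ιO p → Matrix (O p) (O p) ℂ)
    (t : ∀ p, ιI p × ιO p) :
    Matrix ((p : P) → I p × O p) ((p : P) → I p × O p) ℂ :=
  fun x y => ∏ p, σI p (t p).1 (x p).1 (y p).1 * σO p (t p).2 (x p).2 (y p).2

/-- The operator with Hilbert–Schmidt coefficients `w`. -/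
noncomputable def expand (σI : ∀ p, ιI p → Matrix (I p) (I p) ℂ)
    (σO : ∀ p, ιO p → Matrix (O p) (O p) ℂ)
    (w : (∀ p, ιI p × ιO p) → ℝ) :
    Matrix ((p : P) → I p × O p) ((p : P) → I p × O p) ℂ :=
  ∑ t : ∀ p, ιI p × ιO p, (w t : ℂ) • hsTerm σI σO t

end defs

section types

variable {ιI ιO : P → Type*} [∀ p, Zero (ιI p)] [∀ p, Zero (ιO p)]

/-- A term is trivial on party `p` if its indices on both the input and the output
system of `p` are zero (identity factor on party `p`). -/
def TrivialAt (t : ∀ p, ιI p × ιO p) (p : P) : Prop :=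
  (t p).1 = 0 ∧ (t p).2 = 0

/-- A term is in type on party `p` if it is nontrivial on the input system of `p`
and trivial (identity) on the output system of `p`. -/
def InTypeAt (t : ∀ p, ιI p × ιO p) (p : P) : Prop :=
  (t p).1 ≠ 0 ∧ (t p).2 = 0

/-- A term includes the out type on party `p` if it is nontrivial on the output
system of `p`. -/
def IncludesOutAt (t : ∀ p, ιI p × ιO p) (p : P) : Prop :=
  (t p).2 ≠ 0

/-- A term is nontrivial if it is nontrivial on some party
(i.e. it is not the identity term). -/
def NontrivialTerm (t : ∀ p, ιI p × ιO p) : Prop :=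
  ∃ p, ¬ TrivialAt t p

/-- The Oreshkov–Giarmatzi condition on Hilbert–Schmidt coefficients: every nonzero
nontrivial term is in type on at least one party. -/
def OGCoeffs (w : (∀ p, ιI p × ιO p) → ℝ) : Prop :=
  ∀ t, w t ≠ 0 → NontrivialTerm t → ∃ p, InTypeAt t p

end types

section process

variable {I O : P → Type*} [∀ p, Fintype (I p)] [∀ p, DecidableEq (I p)]
  [∀ p, Fintype (O p)] [∀ p, DecidableEq (O p)]
  {ιI ιO : P → Type*} [∀ p, Fintype (ιI p)] [∀ p, Zero (ιI p)]
  [∀ p, Fintype (ιO p)] [∀ p, Zero (ιO p)]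

/-- `W` is a valid process with Hilbert–Schmidt coefficients `w` (relative to the
Hilbert–Schmidt bases `σI`, `σO`): it is positive semidefinite, has trace equal to the
product `d_O` of the output dimensions, has expansion given by `w`, and every nonzero
nontrivial Hilbert–Schmidt term of it is in type on at least one party. -/
def IsProcessWith (σI : ∀ p, ιI p → Matrix (I p) (I p) ℂ)
    (σO : ∀ p, ιO p → Matrix (O p) (O p) ℂ)
    (W : Matrix ((p : P) → I p × O p) ((p : P) → I p × O p) ℂ)
    (w : (∀ p, ιI p × ιO p) → ℝ) : Prop :=
  W.PosSemidef ∧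
  W.trace = ∏ p, (Fintype.card (O p) : ℂ) ∧
  W = expand σI σO w ∧
  OGCoeffs w

/-- `W` is a valid process (relative to the Hilbert–Schmidt bases `σI`, `σO`). -/
def IsProcess (σI : ∀ p, ιI p → Matrix (I p) (I p) ℂ)
    (σO : ∀ p, ιO p → Matrix (O p) (O p) ℂ)
    (W : Matrix ((p : P) → I p × O p) ((p : P) → I p × O p) ℂ) : Prop :=
  ∃ w, IsProcessWith σI σO W w

end process

section product

variable {I' O' I'' O'' : P → Type*}

/-- The tensor product `P = W ⊗ Z` of an operator `W` for parties `A', B', …` and an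
operator `Z` for parties `A'', B'', …`, regarded as an operator for the combined
parties `A = A'A''` (input `a₁ = a₁'a₁''`, output `a₂ = a₂'a₂''`), `B = B'B''`, …. -/
def prodOp (W : Matrix ((p : P) → I' p × O' p) ((p : P) → I' p × O' p) ℂ)
    (Z : Matrix ((p : P) → I'' p × O'' p) ((p : P) → I'' p × O'' p) ℂ) :
    Matrix ((p : P) → (I' p × I'' p) × (O' p × O'' p))
      ((p : P) → (I' p × I'' p) × (O' p × O'' p)) ℂ :=
  fun x y =>
    W (fun p => ((x p).1.1, (x p).2.1)) (fun p => ((y p).1.1, (y p).2.1)) *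
    Z (fun p => ((x p).1.2, (x p).2.2)) (fun p => ((y p).1.2, (y p).2.2))

end product

/-- The Hilbert–Schmidt basis of a combined system, consisting of the tensor (Kronecker)
products of the basis elements of the two subsystems; its distinguished (identity)
element is the product of the two distinguished elements. -/
def prodBasis {n n' ι ι' : Type*} (σ : ι → Matrix n n ℂ) (σ' : ι' → Matrix n' n' ℂ) :
    ι × ι' → Matrix (n × n') (n × n') ℂ :=
  fun i => σ i.1 ⊗ₖ σ' i.2

section coeffs

variable {ιI' ιO' ιI'' ιO'' : P → Type*}

/-- The Hilbert–Schmidt coefficients of a tensor product `W ⊗ Z` in terms of the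
coefficients `w` of `W` and `z` of `Z`. -/
def prodCoeffs (w : (∀ p, ιI' p × ιO' p) → ℝ) (z : (∀ p, ιI'' p × ιO'' p) → ℝ) :
    (∀ p, (ιI' p × ιI'' p) × (ιO' p × ιO'' p)) → ℝ :=
  fun u => w (fun p => ((u p).1.1, (u p).2.1)) * z (fun p => ((u p).1.2, (u p).2.2))

/-- The multi-index of the tensor product of the term `t` of `W` and the term `s`
of `Z`, as a term for the combined parties. -/
def combineTerm (t : ∀ p, ιI' p × ιO' p) (s : ∀ p, ιI'' p × ιO'' p) :
    ∀ p, (ιI' p × ιI'' p) × (ιO' p × ιO'' p) :=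
  fun p => (((t p).1, (s p).1), ((t p).2, (s p).2))

end coeffs

section twoparty

variable {ιI ιO : Fin 2 → Type*} [∀ p, Zero (ιI p)] [∀ p, Zero (ιO p)]

/-- For two parties `A` (party `0`) and `B` (party `1`), an `A` to `B` signalling
term: a term of type `a₂b₁` or `a₁a₂b₁`, i.e. nontrivial on `a₂` and on `b₁` and
trivial on `b₂`. -/
def AtoBSig (t : ∀ p, ιI p × ιO p) : Prop :=
  (t 0).2 ≠ 0 ∧ (t 1).1 ≠ 0 ∧ (t 1).2 = 0

/-- A `B` to `A` signalling term: a term of type `a₁b₂` or `a₁b₁b₂`, i.e. nontrivial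
on `b₂` and on `a₁` and trivial on `a₂`. -/
def BtoASig (t : ∀ p, ιI p × ιO p) : Prop :=
  (t 1).2 ≠ 0 ∧ (t 0).1 ≠ 0 ∧ (t 0).2 = 0

end twoparty

/-- The Pauli (Hilbert–Schmidt) basis `{𝟙, σ₁, σ₂, σ₃}` of qubit operators. -/
noncomputable def pauli : Fin 4 → Matrix (Fin 2) (Fin 2) ℂ :=
  ![1, !![0, 1; 1, 0], !![0, -Complex.I; Complex.I, 0], !![1, 0; 0, -1]]

/-- The maximally mixed qubit state `ω = 𝟙/2`. -/
noncomputable def omega2 : Matrix (Fin 2) (Fin 2) ℂ := (2 : ℂ)⁻¹ • 1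

/-- The maximally correlating two-qubit state `ρ_∼ = (𝟙⊗𝟙 + σ₃⊗σ₃)/4`. -/
noncomputable def rhoCorr2 : Matrix (Fin 2 × Fin 2) (Fin 2 × Fin 2) ℂ :=
  (4 : ℂ)⁻¹ • ((1 : Matrix (Fin 2) (Fin 2) ℂ) ⊗ₖ (1 : Matrix (Fin 2) (Fin 2) ℂ)
    + pauli 3 ⊗ₖ pauli 3)

/-- The two-party qubit process
`W = (d_O/2) (ω^{x₁} ⊗ ρ_∼^{x₂y₁} ⊗ ω^{y₂} + ω^{x₂} ⊗ ρ_∼^{x₁y₂} ⊗ ω^{y₁})`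
(`d_O = 4`), written as a matrix on the total Hilbert space of the two parties
`0 = X` (input `x₁`, output `x₂`) and `1 = Y` (input `y₁`, output `y₂`),
all four systems being qubits. -/
noncomputable def Wq :
    Matrix ((p : Fin 2) → Fin 2 × Fin 2) ((p : Fin 2) → Fin 2 × Fin 2) ℂ :=
  fun x y =>
    2 * (omega2 (x 0).1 (y 0).1 * rhoCorr2 ((x 0).2, (x 1).1) ((y 0).2, (y 1).1)
          * omega2 (x 1).2 (y 1).2
       + omega2 (x 0).2 (y 0).2 * rhoCorr2 ((x 0).1, (x 1).2) ((y 0).1, (y 1).2)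
          * omega2 (x 1).1 (y 1).1)

/-- The maximally mixed state `ω = 𝟙/4` of a 4-dimensional (two-qubit) system. -/
noncomputable def omega4 : Matrix (Fin 2 × Fin 2) (Fin 2 × Fin 2) ℂ := (4 : ℂ)⁻¹ • 1

/-- The maximally correlating state `ρ_∼ = (1/4) ∑_{i=0}^{3} |ii⟩⟨ii|` of two copies of a
4-dimensional (two-qubit) system, in the computational basis. -/
noncomputable def rhoCorr4 :
    Matrix ((Fin 2 × Fin 2) × (Fin 2 × Fin 2)) ((Fin 2 × Fin 2) × (Fin 2 × Fin 2)) ℂ :=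
  fun r c => if r.1 = r.2 ∧ c.1 = c.2 ∧ r.1 = c.1 then (4 : ℂ)⁻¹ else 0

/-- The two-party process
`W = (d_O/2) (ω^{a₁} ⊗ ρ_∼^{a₂b₁} ⊗ ω^{b₂} + ω^{a₂} ⊗ ρ_∼^{a₁b₂} ⊗ ω^{b₁})`
(`d_O = 16`) on the combined parties `0 = A = A'A''` and `1 = B = B'B''`, whose systems
`a₁ = a₁'a₁''` etc. are each two qubits: the first qubit of each pair is the primed
system, the second the double-primed one. -/
noncomputable def W4 :
    Matrix ((p : Fin 2) → (Fin 2 × Fin 2) × (Fin 2 × Fin 2))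
      ((p : Fin 2) → (Fin 2 × Fin 2) × (Fin 2 × Fin 2)) ℂ :=
  fun x y =>
    8 * (omega4 (x 0).1 (y 0).1 * rhoCorr4 ((x 0).2, (x 1).1) ((y 0).2, (y 1).1)
          * omega4 (x 1).2 (y 1).2
       + omega4 (x 0).2 (y 0).2 * rhoCorr4 ((x 0).1, (x 1).2) ((y 0).1, (y 1).2)
          * omega4 (x 1).1 (y 1).1)

/-- Partial trace over the double-primed systems `a₁'', a₂'', b₁'', b₂''` (the second
qubit of each of the four two-qubit systems). -/
noncomputable def ptraceSecond
    (W : Matrix ((p : Fin 2) → (Fin 2 × Fin 2) × (Fin 2 × Fin 2))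
      ((p : Fin 2) → (Fin 2 × Fin 2) × (Fin 2 × Fin 2)) ℂ) :
    Matrix ((p : Fin 2) → Fin 2 × Fin 2) ((p : Fin 2) → Fin 2 × Fin 2) ℂ :=
  fun x y => ∑ e : (p : Fin 2) → Fin 2 × Fin 2,
    W (fun p => (((x p).1, (e p).1), ((x p).2, (e p).2)))
      (fun p => (((y p).1, (e p).1), ((y p).2, (e p).2)))

/-- Partial trace over the primed systems `a₁', a₂', b₁', b₂'` (the first qubit of each
of the four two-qubit systems). -/
noncomputable def ptraceFirst
    (W : Matrix ((p : Fin 2) → (Fin 2 × Fin 2) × (Fin 2 × Fin 2))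
      ((p : Fin 2) → (Fin 2 × Fin 2) × (Fin 2 × Fin 2)) ℂ) :
    Matrix ((p : Fin 2) → Fin 2 × Fin 2) ((p : Fin 2) → Fin 2 × Fin 2) ℂ :=
  fun x y => ∑ e : (p : Fin 2) → Fin 2 × Fin 2,
    W (fun p => (((e p).1, (x p).1), ((e p).2, (x p).2)))
      (fun p => (((e p).1, (y p).1), ((e p).2, (y p).2)))

end ProcessPaper

lemma Matrix.IsHermitian.trace_mul_self_ne_zero {n : Type*} [Fintype n] {A : Matrix n n ℂ}
    (hA : A.IsHermitian) (h : A ≠ 0) : (A * A).trace ≠ 0 := by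
  simpa only [hA.eq] using Matrix.trace_conjTranspose_mul_self_eq_zero_iff.not.mpr h

lemma Prod.ne_iff {α β : Type*} {a b : α × β} : a ≠ b ↔ a.1 ≠ b.1 ∨ a.2 ≠ b.2 := by
  rw [Ne, Prod.ext_iff, not_and_or]

namespace ProcessPaper

section TensorFamily

variable {P : Type*} [Fintype P] {I O : P → Type*}
  {ιI ιO : P → Type*} (σI : ∀ p, ιI p → Matrix (I p) (I p) ℂ)
  (σO : ∀ p, ιO p → Matrix (O p) (O p) ℂ)

lemma tensorFamily_mul [DecidableEq P] [∀ p, Fintype (I p)] [∀ p, Fintype (O p)]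
    (M N : ∀ p, Matrix (I p × O p) (I p × O p) ℂ) :
    tensorFamily M * tensorFamily N = tensorFamily (fun p => M p * N p) := by
  ext x y
  simp only [tensorFamily, Matrix.mul_apply, ← Finset.prod_mul_distrib]
  exact (Fintype.prod_sum fun p j => M p (x p) j * N p j (y p)).symm

lemma trace_tensorFamily [DecidableEq P] [∀ p, Fintype (I p)] [∀ p, Fintype (O p)]
    (M : ∀ p, Matrix (I p × O p) (I p × O p) ℂ) :
    (tensorFamily M).trace = ∏ p, (M p).trace :=
  (Fintype.prod_sum fun p a => M p a a).symm

lemma hsTerm_eq_tensorFamily (t : ∀ p, ιI p × ιO p) :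
    hsTerm σI σO t = tensorFamily (fun p => σI p (t p).1 ⊗ₖ σO p (t p).2) :=
  rfl

variable [DecidableEq P] [∀ p, Fintype (I p)] [∀ p, Fintype (O p)]

lemma trace_hsTerm (t : ∀ p, ιI p × ιO p) :
    (hsTerm σI σO t).trace = ∏ p, (σI p (t p).1).trace * (σO p (t p).2).trace := by
  simp only [hsTerm_eq_tensorFamily, trace_tensorFamily, Matrix.trace_kronecker]

lemma trace_hsTerm_mul (t s : ∀ p, ιI p × ιO p) :
    (hsTerm σI σO t * hsTerm σI σO s).trace
      = ∏ p, (σI p (t p).1 * σI p (s p).1).trace * (σO p (t p).2 * σO p (s p).2).trace := by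
  simp only [hsTerm_eq_tensorFamily, tensorFamily_mul, trace_tensorFamily,
    ← Matrix.mul_kronecker_mul, Matrix.trace_kronecker]

end TensorFamily

namespace IsHSBasis

variable {n ι : Type*} [Fintype n] [DecidableEq n] [Fintype ι] [Zero ι] {σ : ι → Matrix n n ℂ}

lemma trace_mul_self_ne_zero (h : IsHSBasis σ) (i : ι) : (σ i * σ i).trace ≠ 0 :=
  (h.2.1 i).trace_mul_self_ne_zero (h.2.2.2.2.2 i)

lemma prod {n' ι' : Type*} [Fintype n'] [DecidableEq n'] [Fintype ι'] [Zero ι']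
    {σ' : ι' → Matrix n' n' ℂ} (h : IsHSBasis σ) (h' : IsHSBasis σ') :
    IsHSBasis (prodBasis σ σ') := by
  have hsq (i : ι × ι') : (prodBasis σ σ' i * prodBasis σ σ' i).trace ≠ 0 := by
    rw [prodBasis, ← Matrix.mul_kronecker_mul, Matrix.trace_kronecker]
    exact mul_ne_zero (h.trace_mul_self_ne_zero i.1) (h'.trace_mul_self_ne_zero i.2)
  obtain ⟨hcard, hherm, hone, htr, horth, -⟩ := h
  obtain ⟨hcard', hherm', hone', htr', horth', -⟩ := h'
  refine ⟨by simp [hcard, hcard', mul_pow], fun i => ?_, ?_, fun i hi => ?_, fun i j hij => ?_,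
    fun i hi => hsq i (by rw [hi, zero_mul, Matrix.trace_zero])⟩
  · simp only [Matrix.IsHermitian, prodBasis, Matrix.conjTranspose_kronecker,
      hherm i.1 |>.eq, hherm' i.2 |>.eq]
  · simp [prodBasis, hone, hone']
  · rw [prodBasis, Matrix.trace_kronecker]
    rcases Prod.ne_iff.mp hi with h1 | h2
    · rw [htr _ h1, zero_mul]
    · rw [htr' _ h2, mul_zero]
  · rw [prodBasis, prodBasis, ← Matrix.mul_kronecker_mul, Matrix.trace_kronecker]
    rcases Prod.ne_iff.mp hij with h1 | h2
    · rw [horth _ _ h1, zero_mul]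
    · rw [horth' _ _ h2, mul_zero]

end IsHSBasis

section Expansion

variable {P : Type*} [Fintype P] [DecidableEq P] {I O : P → Type*}
  [∀ p, Fintype (I p)] [∀ p, DecidableEq (I p)] [∀ p, Fintype (O p)] [∀ p, DecidableEq (O p)]
  {ιI ιO : P → Type*} [∀ p, Fintype (ιI p)] [∀ p, Zero (ιI p)]
  [∀ p, Fintype (ιO p)] [∀ p, Zero (ιO p)]
  {σI : ∀ p, ιI p → Matrix (I p) (I p) ℂ} {σO : ∀ p, ιO p → Matrix (O p) (O p) ℂ}

lemma trace_hsTerm_of_ne_zero (hI : ∀ p, IsHSBasis (σI p)) (hO : ∀ p, IsHSBasis (σO p))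
    {t : ∀ p, ιI p × ιO p} (ht : t ≠ 0) : (hsTerm σI σO t).trace = 0 := by
  obtain ⟨p, hp⟩ := Function.ne_iff.mp ht
  rw [trace_hsTerm]
  refine Finset.prod_eq_zero (Finset.mem_univ p) ?_
  rcases Prod.ne_iff.mp hp with h | h
  · rw [(hI p).2.2.2.1 _ h, zero_mul]
  · rw [(hO p).2.2.2.1 _ h, mul_zero]

lemma trace_hsTerm_mul_of_ne (hI : ∀ p, IsHSBasis (σI p)) (hO : ∀ p, IsHSBasis (σO p))
    {t s : ∀ p, ιI p × ιO p} (hts : t ≠ s) : (hsTerm σI σO t * hsTerm σI σO s).trace = 0 := by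
  obtain ⟨p, hp⟩ := Function.ne_iff.mp hts
  rw [trace_hsTerm_mul]
  refine Finset.prod_eq_zero (Finset.mem_univ p) ?_
  rcases Prod.ne_iff.mp hp with h | h
  · rw [(hI p).2.2.2.2.1 _ _ h, zero_mul]
  · rw [(hO p).2.2.2.2.1 _ _ h, mul_zero]

lemma trace_hsTerm_mul_self_ne_zero (hI : ∀ p, IsHSBasis (σI p))
    (hO : ∀ p, IsHSBasis (σO p)) (t : ∀ p, ιI p × ιO p) :
    (hsTerm σI σO t * hsTerm σI σO t).trace ≠ 0 := by
  rw [trace_hsTerm_mul]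
  exact Finset.prod_ne_zero_iff.mpr fun p _ =>
    mul_ne_zero ((hI p).trace_mul_self_ne_zero _) ((hO p).trace_mul_self_ne_zero _)

lemma trace_expand (hI : ∀ p, IsHSBasis (σI p)) (hO : ∀ p, IsHSBasis (σO p))
    (w : (∀ p, ιI p × ιO p) → ℝ) :
    (expand σI σO w).trace = w 0 * ∏ p, (Fintype.card (I p) * Fintype.card (O p) : ℂ) := by
  rw [expand, Matrix.trace_sum, Finset.sum_eq_single 0
    (fun t _ ht => by rw [Matrix.trace_smul, trace_hsTerm_of_ne_zero hI hO ht, smul_zero])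
    (by simp), Matrix.trace_smul, trace_hsTerm]
  simp [(hI _).2.2.1, (hO _).2.2.1]

lemma trace_expand_mul_hsTerm (hI : ∀ p, IsHSBasis (σI p)) (hO : ∀ p, IsHSBasis (σO p))
    (w : (∀ p, ιI p × ιO p) → ℝ) (u : ∀ p, ιI p × ιO p) :
    (expand σI σO w * hsTerm σI σO u).trace = w u * (hsTerm σI σO u * hsTerm σI σO u).trace := by
  rw [expand, Finset.sum_mul, Matrix.trace_sum, Finset.sum_eq_single u
    (fun t _ ht => by rw [smul_mul_assoc, Matrix.trace_smul, trace_hsTerm_mul_of_ne hI hO ht,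
      smul_zero])
    (by simp), smul_mul_assoc, Matrix.trace_smul, smul_eq_mul]

lemma expand_injective (hI : ∀ p, IsHSBasis (σI p)) (hO : ∀ p, IsHSBasis (σO p)) :
    Function.Injective (expand σI σO) := by
  intro w v hwv
  funext u
  have h := trace_expand_mul_hsTerm hI hO w u
  rw [hwv, trace_expand_mul_hsTerm hI hO v u] at h
  exact_mod_cast (mul_right_cancel₀ (trace_hsTerm_mul_self_ne_zero hI hO u) h).symm

end Expansion

section Product

variable {P : Type*} {ιI' ιO' ιI'' ιO'' : P → Type*}

def combineTermEquiv :
    ((∀ p, ιI' p × ιO' p) × (∀ p, ιI'' p × ιO'' p)) ≃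
      (∀ p, (ιI' p × ιI'' p) × (ιO' p × ιO'' p)) where
  toFun ts := combineTerm ts.1 ts.2
  invFun u := (fun p => ((u p).1.1, (u p).2.1), fun p => ((u p).1.2, (u p).2.2))
  left_inv _ := rfl
  right_inv _ := rfl

@[simp]
lemma combineTermEquiv_apply (ts : (∀ p, ιI' p × ιO' p) × (∀ p, ιI'' p × ιO'' p)) :
    combineTermEquiv ts = combineTerm ts.1 ts.2 :=
  rfl

lemma prodCoeffs_combineTerm (w : (∀ p, ιI' p × ιO' p) → ℝ) (z : (∀ p, ιI'' p × ιO'' p) → ℝ)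
    (t : ∀ p, ιI' p × ιO' p) (s : ∀ p, ιI'' p × ιO'' p) :
    prodCoeffs w z (combineTerm t s) = w t * z s :=
  rfl

variable [Fintype P] {I' O' I'' O'' : P → Type*}
  (σI' : ∀ p, ιI' p → Matrix (I' p) (I' p) ℂ) (σO' : ∀ p, ιO' p → Matrix (O' p) (O' p) ℂ)
  (σI'' : ∀ p, ιI'' p → Matrix (I'' p) (I'' p) ℂ)
  (σO'' : ∀ p, ιO'' p → Matrix (O'' p) (O'' p) ℂ)

lemma hsTerm_combineTerm (t : ∀ p, ιI' p × ιO' p) (s : ∀ p, ιI'' p × ιO'' p) :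
    hsTerm (fun p => prodBasis (σI' p) (σI'' p)) (fun p => prodBasis (σO' p) (σO'' p))
        (combineTerm t s) = prodOp (hsTerm σI' σO' t) (hsTerm σI'' σO'' s) := by
  ext x y
  simp only [hsTerm, prodOp, prodBasis, combineTerm, Matrix.kroneckerMap_apply,
    ← Finset.prod_mul_distrib]
  exact Finset.prod_congr rfl fun p _ => by ring

lemma prodOp_expand [DecidableEq P] [∀ p, Fintype (ιI' p)] [∀ p, Fintype (ιO' p)]
    [∀ p, Fintype (ιI'' p)] [∀ p, Fintype (ιO'' p)]
    (w : (∀ p, ιI' p × ιO' p) → ℝ) (z : (∀ p, ιI'' p × ιO'' p) → ℝ) :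
    prodOp (expand σI' σO' w) (expand σI'' σO'' z)
      = expand (fun p => prodBasis (σI' p) (σI'' p)) (fun p => prodBasis (σO' p) (σO'' p))
          (prodCoeffs w z) := by
  conv_rhs => rw [expand, ← combineTermEquiv.sum_comp, Fintype.sum_prod_type]
  ext x y
  simp only [prodOp, expand, Matrix.sum_apply, Matrix.smul_apply, Finset.sum_mul_sum]
  refine Finset.sum_congr rfl fun t _ => Finset.sum_congr rfl fun s _ => ?_
  rw [combineTermEquiv_apply, prodCoeffs_combineTerm, hsTerm_combineTerm]
  simp only [prodOp, smul_eq_mul, Complex.ofReal_mul]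
  ring

end Product

section Signalling

variable {ιI' ιO' ιI'' ιO'' : Fin 2 → Type*} [∀ p, Zero (ιI' p)] [∀ p, Zero (ιO' p)]
  [∀ p, Zero (ιI'' p)] [∀ p, Zero (ιO'' p)]
  {t : ∀ p, ιI' p × ιO' p} {s : ∀ p, ιI'' p × ιO'' p}

lemma AtoBSig.nontrivialTerm_combineTerm (ht : AtoBSig t) : NontrivialTerm (combineTerm t s) :=
  ⟨0, fun h => ht.1 (Prod.mk_eq_zero.mp h.2).1⟩

lemma AtoBSig.not_inTypeAt_combineTerm (ht : AtoBSig t) (hs : BtoASig s) (p : Fin 2) :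
    ¬ InTypeAt (combineTerm t s) p := by
  intro h
  fin_cases p
  · exact ht.1 (Prod.mk_eq_zero.mp h.2).1
  · exact hs.1 (Prod.mk_eq_zero.mp h.2).2

variable {I' O' I'' O'' : Fin 2 → Type*}
  [∀ p, Fintype (I' p)] [∀ p, DecidableEq (I' p)] [∀ p, Fintype (O' p)] [∀ p, DecidableEq (O' p)]
  [∀ p, Fintype (I'' p)] [∀ p, DecidableEq (I'' p)]
  [∀ p, Fintype (O'' p)] [∀ p, DecidableEq (O'' p)]
  [∀ p, Fintype (ιI' p)] [∀ p, Fintype (ιO' p)] [∀ p, Fintype (ιI'' p)] [∀ p, Fintype (ιO'' p)]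
  {σI' : ∀ p, ιI' p → Matrix (I' p) (I' p) ℂ} {σO' : ∀ p, ιO' p → Matrix (O' p) (O' p) ℂ}
  {σI'' : ∀ p, ιI'' p → Matrix (I'' p) (I'' p) ℂ}
  {σO'' : ∀ p, ιO'' p → Matrix (O'' p) (O'' p) ℂ}

theorem not_isProcess_prodOp_of_signalling
    (hI' : ∀ p, IsHSBasis (σI' p)) (hO' : ∀ p, IsHSBasis (σO' p))
    (hI'' : ∀ p, IsHSBasis (σI'' p)) (hO'' : ∀ p, IsHSBasis (σO'' p))
    {w : (∀ p, ιI' p × ιO' p) → ℝ} {z : (∀ p, ιI'' p × ιO'' p) → ℝ}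
    (ht : AtoBSig t) (hwt : w t ≠ 0) (hs : BtoASig s) (hzs : z s ≠ 0) :
    ¬ IsProcess (fun p => prodBasis (σI' p) (σI'' p)) (fun p => prodBasis (σO' p) (σO'' p))
      (prodOp (expand σI' σO' w) (expand σI'' σO'' z)) := by
  rintro ⟨v, -, -, hexp, hog⟩
  have hv : v = prodCoeffs w z :=
    expand_injective (fun p => (hI' p).prod (hI'' p)) (fun p => (hO' p).prod (hO'' p))
      (hexp.symm.trans (prodOp_expand σI' σO' σI'' σO'' w z))
  have hcoeff : v (combineTerm t s) ≠ 0 := by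
    rw [hv, prodCoeffs_combineTerm]
    exact mul_ne_zero hwt hzs
  obtain ⟨p, hp⟩ := hog _ hcoeff ht.nontrivialTerm_combineTerm
  exact ht.not_inTypeAt_combineTerm hs p hp

end Signalling

lemma pauli_mul_trace (i j : Fin 4) : (pauli i * pauli j).trace = if i = j then 2 else 0 := by
  fin_cases i <;> fin_cases j <;>
    simp [pauli, Matrix.trace_fin_two, Complex.I_mul_I] <;> norm_num

lemma isHSBasis_pauli : IsHSBasis pauli := by
  refine ⟨by simp, fun i => ?_, rfl, fun i hi => ?_, fun i j hij => ?_, fun i h => ?_⟩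
  · fin_cases i <;> ext a b <;> fin_cases a <;> fin_cases b <;> simp [pauli]
  · fin_cases i <;> simp_all [pauli, Matrix.trace_fin_two]
  · rw [pauli_mul_trace, if_neg hij]
  · simpa [h] using pauli_mul_trace i i

lemma omega2_apply (a b : Fin 2) : omega2 a b = if a = b then 2⁻¹ else 0 := by
  simp [omega2, Matrix.one_apply]

lemma rhoCorr2_apply (r c : Fin 2 × Fin 2) :
    rhoCorr2 r c = if r = c ∧ r.1 = r.2 then 2⁻¹ else 0 := by
  fin_cases r <;> fin_cases c <;> simp [rhoCorr2, pauli] <;> norm_num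

lemma Wq_eq_diagonal : Wq = Matrix.diagonal fun x =>
    (if (x 0).2 = (x 1).1 then 4⁻¹ else 0) + (if (x 0).1 = (x 1).2 then 4⁻¹ else 0) := by
  ext x y
  by_cases hxy : x = y
  · subst hxy
    simp only [Wq, omega2_apply, rhoCorr2_apply, Matrix.diagonal_apply_eq, true_and, if_true]
    split_ifs <;> norm_num
  · rw [Matrix.diagonal_apply_ne _ hxy]
    have hne : x 0 ≠ y 0 ∨ x 1 ≠ y 1 := by
      simpa only [Ne, funext_iff, Fin.forall_fin_two, not_and_or] using hxy
    rcases hne with h | h <;> rcases Prod.ne_iff.mp h with h | h <;>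
      simp [Wq, omega2_apply, rhoCorr2_apply, h]

lemma Wq_posSemidef : Wq.PosSemidef := by
  rw [Wq_eq_diagonal]
  refine Matrix.posSemidef_diagonal_iff.mpr fun x => ?_
  split_ifs <;> norm_num [Complex.le_def]

-- `σ₃^{x₂} σ₃^{y₁}` and `σ₃^{x₁} σ₃^{y₂}`, the correlations carried by the two channels of `Wq`
def corrXY : ∀ _ : Fin 2, Fin 4 × Fin 4 := ![(0, 3), (3, 0)]
def corrYX : ∀ _ : Fin 2, Fin 4 × Fin 4 := ![(3, 0), (0, 3)]

lemma atoBSig_corrXY : AtoBSig corrXY := ⟨by decide, by decide, by decide⟩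

lemma btoASig_corrYX : BtoASig corrYX := ⟨by decide, by decide, by decide⟩

lemma corrXY_ne_zero : corrXY ≠ 0 := by decide

lemma corrYX_ne_zero : corrYX ≠ 0 := by decide

lemma corrXY_ne_corrYX : corrXY ≠ corrYX := by decide

noncomputable def wq : (∀ _ : Fin 2, Fin 4 × Fin 4) → ℝ := fun t =>
  (if t = 0 then 4⁻¹ else 0) + (if t = corrXY then 8⁻¹ else 0) + (if t = corrYX then 8⁻¹ else 0)

lemma wq_zero : wq 0 = 4⁻¹ := by
  simp [wq, corrXY_ne_zero.symm, corrYX_ne_zero.symm]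

lemma wq_corrXY : wq corrXY = 8⁻¹ := by
  simp [wq, corrXY_ne_zero, corrXY_ne_corrYX]

lemma wq_corrYX : wq corrYX = 8⁻¹ := by
  simp [wq, corrYX_ne_zero, corrXY_ne_corrYX.symm]

lemma Wq_eq_expand : Wq = expand (fun _ : Fin 2 => pauli) (fun _ : Fin 2 => pauli) wq := by
  have hexp : expand (fun _ : Fin 2 => pauli) (fun _ : Fin 2 => pauli) wq
      = (4⁻¹ : ℂ) • hsTerm (fun _ : Fin 2 => pauli) (fun _ : Fin 2 => pauli) 0
        + (8⁻¹ : ℂ) • hsTerm (fun _ : Fin 2 => pauli) (fun _ : Fin 2 => pauli) corrXY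
        + (8⁻¹ : ℂ) • hsTerm (fun _ : Fin 2 => pauli) (fun _ : Fin 2 => pauli) corrYX := by
    unfold expand wq
    push_cast [apply_ite (fun r : ℝ => (r : ℂ))]
    simp [add_smul, ite_smul, Finset.sum_add_distrib, Finset.sum_ite_eq']
  rw [hexp]
  ext x y
  simp only [Wq, omega2, rhoCorr2, hsTerm, corrXY, corrYX, Matrix.add_apply, Matrix.smul_apply,
    Matrix.kroneckerMap_apply, Fin.prod_univ_two, smul_eq_mul, Matrix.cons_val_zero,
    Matrix.cons_val_one, Pi.zero_apply, Prod.fst_zero, Prod.snd_zero, show pauli 0 = 1 from rfl]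
  ring

lemma ogCoeffs_wq : OGCoeffs wq := by
  intro t ht hnt
  have hmem : t = 0 ∨ t = corrXY ∨ t = corrYX := by
    by_contra! hc
    simp [wq, hc.1, hc.2.1, hc.2.2] at ht
  rcases hmem with rfl | rfl | rfl
  · obtain ⟨p, hp⟩ := hnt
    exact (hp ⟨rfl, rfl⟩).elim
  · exact ⟨1, by decide, by decide⟩
  · exact ⟨0, by decide, by decide⟩

lemma Wq_isProcess : IsProcess (fun _ : Fin 2 => pauli) (fun _ : Fin 2 => pauli) Wq := by
  refine ⟨wq, Wq_posSemidef, ?_, Wq_eq_expand, ogCoeffs_wq⟩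
  rw [Wq_eq_expand, trace_expand (fun _ => isHSBasis_pauli) (fun _ => isHSBasis_pauli)]
  simp [wq_zero]
  norm_num

/-- There exist valid two-party processes `W` (on parties `A'`, `B'`) and `Z` (on
parties `A''`, `B''`), all systems being qubits with the Pauli Hilbert–Schmidt
bases—which may moreover be taken equal to each other and classical (diagonal in the
computational basis), namely an equal-weight mixture of a classical identity channel
from one party to the other and one in the opposite direction—such that the tensor
product `W ⊗ Z` is not a valid process for the combined parties `A = A'A''` and
`B = B'B''`. -/
theorem statement10 :
    ∃ W Z : Matrix ((p : Fin 2) → Fin 2 × Fin 2) ((p : Fin 2) → Fin 2 × Fin 2) ℂ,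
      IsProcess (fun _ : Fin 2 => pauli) (fun _ : Fin 2 => pauli) W ∧
      IsProcess (fun _ : Fin 2 => pauli) (fun _ : Fin 2 => pauli) Z ∧
      W = Z ∧
      (∀ x y, x ≠ y → W x y = 0) ∧
      ¬ IsProcess (fun _ : Fin 2 => prodBasis pauli pauli)
          (fun _ : Fin 2 => prodBasis pauli pauli) (prodOp W Z) := by
  refine ⟨Wq, Wq, Wq_isProcess, Wq_isProcess, rfl,
    fun x y hxy => by rw [Wq_eq_diagonal, Matrix.diagonal_apply_ne _ hxy], ?_⟩
  rw [Wq_eq_expand]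
  have hσ : ∀ _ : Fin 2, IsHSBasis pauli := fun _ => isHSBasis_pauli
  exact not_isProcess_prodOp_of_signalling hσ hσ hσ hσ atoBSig_corrXY (by norm_num [wq_corrXY])
    btoASig_corrYX (by norm_num [wq_corrYX])

end ProcessPaper
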